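/- arXiv:1312.0802 — 2 statements merged into one kernel-verified Lean document; each statement's English description precedes it below -/
import Mathlib

section
/- Let X be a connected, locally finite, vertex-transitive (homogeneous) one-ended graph, let r be a natural number, and let K be a finite set of vertices of X whose diameter is at most 2r, i.e. d(u,v) ≤ 2r for all u, v ∈ K. Let C be a connected component of the subgraph induced on the complement of K, and let x be a vertex of C. Then either there exists a geodesic ray f : ℕ → V(X) whose image is contained in C and which passes through x (i.e. x lies in the image of f), or the distance from x to K is at most r (i.e. there exists y ∈ K with d(x,y) ≤ r). -/
open SimpleGraph

/-- A graph is vertex-transitive (homogeneous) if any vertex can be carried to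
any other vertex by a graph automorphism. -/
def VertexTransitive {V : Type*} (G : SimpleGraph V) : Prop :=
  ∀ u v : V, ∃ φ : G ≃g G, φ u = v

/-- A graph is one-ended if for every finite set `K` of vertices, the subgraph
induced on the complement of `K` has exactly one infinite connected component. -/
def OneEnded {V : Type*} (G : SimpleGraph V) : Prop :=
  ∀ K : Set V, K.Finite →
    ∃! C : (G.induce Kᶜ).ConnectedComponent, C.supp.Infinite

section Aux

variable {V : Type*} {G : SimpleGraph V}

private lemma aux_exists_walk_getVert {u v : V} (p : G.Walk u v) (i j : ℕ)
    (hij : i ≤ j) (hj : j ≤ p.length) :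
    ∃ q : G.Walk (p.getVert i) (p.getVert j), q.length = j - i := by
  induction p generalizing i j with
  | nil =>
    simp only [Walk.length_nil, Nat.le_zero] at hj
    subst hj
    obtain rfl : i = 0 := Nat.le_zero.mp hij
    exact ⟨Walk.nil, rfl⟩
  | cons h q ih =>
    match i, j with
    | 0, 0 => exact ⟨Walk.nil, rfl⟩
    | 0, (j + 1) =>
      obtain ⟨q', hq'⟩ := ih 0 j (Nat.zero_le _) (by simpa using hj)
      refine ⟨(Walk.cons h (q'.copy (Walk.getVert_zero q) rfl)).copy (Walk.getVert_zero _).symm (q.getVert_cons_succ h).symm, ?_⟩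
      simp only [Walk.length_copy, Walk.length_cons, hq']
      omega
    | (i + 1), (j + 1) =>
      obtain ⟨q', hq'⟩ := ih i j (by omega) (by simpa using hj)
      exact ⟨q'.copy (q.getVert_cons_succ h).symm (q.getVert_cons_succ h).symm, by simp only [Walk.length_copy]; omega⟩

private lemma aux_dist_getVert (hconn : G.Connected) {u v : V} (p : G.Walk u v)
    (hp : p.length = G.dist u v) {i j : ℕ} (hij : i ≤ j) (hj : j ≤ p.length) :
    G.dist (p.getVert i) (p.getVert j) = j - i := by
  obtain ⟨q, hq⟩ := aux_exists_walk_getVert p i j hij hj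
  have h1 : G.dist (p.getVert i) (p.getVert j) ≤ j - i := hq ▸ dist_le q
  obtain ⟨q0, hq0⟩ := aux_exists_walk_getVert p 0 i (Nat.zero_le i) (le_trans hij hj)
  obtain ⟨q1, hq1⟩ := aux_exists_walk_getVert p j p.length hj le_rfl
  have h0 : G.dist u (p.getVert i) ≤ i := by
    have := dist_le q0
    rw [hq0] at this
    rw [Walk.getVert_zero] at this
    simpa using this
  have h2 : G.dist (p.getVert j) v ≤ p.length - j := by
    have := dist_le q1
    rw [hq1] at this
    rw [Walk.getVert_length] at this
    exact this
  have t1 : G.dist u v ≤ G.dist u (p.getVert i) + G.dist (p.getVert i) v :=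
    hconn.dist_triangle
  have t2 : G.dist (p.getVert i) v ≤
      G.dist (p.getVert i) (p.getVert j) + G.dist (p.getVert j) v :=
    hconn.dist_triangle
  omega

private lemma aux_iso_dist (hconn : G.Connected) (φ : G ≃g G) (u v : V) :
    G.dist (φ u) (φ v) = G.dist u v := by
  have key : ∀ (ψ : G ≃g G) (a b : V), G.dist (ψ a) (ψ b) ≤ G.dist a b := by
    intro ψ a b
    obtain ⟨p, hp⟩ := hconn.exists_walk_length_eq_dist a b
    calc G.dist (ψ a) (ψ b) ≤ (p.map ψ.toHom).length := dist_le _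
      _ = p.length := Walk.length_map _ _
      _ = G.dist a b := hp
  refine le_antisymm (key φ u v) ?_
  have := key φ.symm (φ u) (φ v)
  simpa using this

private lemma aux_ball_finite (hconn : G.Connected)
    (hlf : ∀ v : V, (G.neighborSet v).Finite) (x : V) :
    ∀ n : ℕ, {v | G.dist x v ≤ n}.Finite := by
  intro n
  induction n with
  | zero =>
    refine Set.Finite.subset (Set.finite_singleton x) ?_
    intro v hv
    simp only [Set.mem_setOf_eq, Nat.le_zero] at hv
    have := (hconn.dist_eq_zero_iff (u := x) (v := v)).mp hv
    simp [this.symm]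
  | succ n ih =>
    refine Set.Finite.subset
      (Set.Finite.union ih (Set.Finite.biUnion ih (fun u _ => hlf u))) ?_
    intro v hv
    simp only [Set.mem_setOf_eq] at hv
    rcases Nat.lt_or_ge (G.dist x v) (n + 1) with h | h
    · exact Or.inl (by simpa using Nat.lt_succ_iff.mp h)
    · have hd : G.dist x v = n + 1 := le_antisymm hv h
      obtain ⟨p, hp⟩ := hconn.exists_walk_length_eq_dist x v
      have hdu : G.dist x (p.getVert n) = n := by
        have := aux_dist_getVert hconn p hp (i := 0) (j := n) (Nat.zero_le _)
          (by omega)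
        rw [Walk.getVert_zero] at this
        simpa using this
      have hadj : G.Adj (p.getVert n) v := by
        have hlen : n < p.length := by omega
        have := p.adj_getVert_succ hlen
        have hv' : p.getVert (n + 1) = v := by
          have : p.length = n + 1 := by omega
          rw [← this]
          exact p.getVert_length
        rwa [hv'] at this
      right
      exact Set.mem_biUnion (by simpa using hdu.le) hadj

private lemma aux_exists_dist_eq (hconn : G.Connected)
    (hlf : ∀ v : V, (G.neighborSet v).Finite) [Infinite V] (x : V) (n : ℕ) :
    ∃ v, G.dist x v = n := by
  have hfin := aux_ball_finite hconn hlf x n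
  obtain ⟨v, hv⟩ := hfin.infinite_compl.nonempty
  simp only [Set.mem_compl_iff, Set.mem_setOf_eq, not_le] at hv
  obtain ⟨p, hp⟩ := hconn.exists_walk_length_eq_dist x v
  refine ⟨p.getVert n, ?_⟩
  have := aux_dist_getVert hconn p hp (i := 0) (j := n) (Nat.zero_le _)
    (by omega)
  rw [Walk.getVert_zero] at this
  simpa using this

private lemma aux_exists_segment (hconn : G.Connected)
    (hlf : ∀ v : V, (G.neighborSet v).Finite) (hvt : VertexTransitive G)
    [Infinite V] (x : V) (n : ℕ) :
    ∃ g : ℤ → V, g 0 = x ∧ ∀ i j : ℤ, -(n : ℤ) ≤ i → i ≤ j → j ≤ n →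
      G.dist (g i) (g j) = (j - i).toNat := by
  obtain ⟨v, hv⟩ := aux_exists_dist_eq hconn hlf x (2 * n)
  obtain ⟨p, hp⟩ := hconn.exists_walk_length_eq_dist x v
  obtain ⟨φ, hφ⟩ := hvt (p.getVert n) x
  refine ⟨fun i => φ (p.getVert ((n : ℤ) + i).toNat), by simpa using hφ, ?_⟩
  intro i j hi hij hj
  rw [aux_iso_dist hconn φ]
  have := aux_dist_getVert hconn p hp (i := ((n : ℤ) + i).toNat)
    (j := ((n : ℤ) + j).toNat) (by omega) (by rw [hp, hv]; omega)
  rw [this]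
  omega

private lemma aux_exists_double_ray (hconn : G.Connected)
    (hlf : ∀ v : V, (G.neighborSet v).Finite) (hvt : VertexTransitive G)
    [Infinite V] (x : V) :
    ∃ f : ℤ → V, f 0 = x ∧ ∀ i j : ℤ, i ≤ j →
      G.dist (f i) (f j) = (j - i).toNat := by
  choose g hg0 hgeo using fun n : ℕ => aux_exists_segment hconn hlf hvt x n
  let U : Ultrafilter ℕ := Ultrafilter.of Filter.atTop
  have hU : ∀ k : ℕ, {n | k ≤ n} ∈ U := fun k =>
    Ultrafilter.of_le Filter.atTop (Filter.mem_atTop k)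
  have key : ∀ i : ℤ, ∃ w : V, {n | g n i = w} ∈ U := by
    intro i
    have hBfin : {v | G.dist x v ≤ i.natAbs}.Finite := aux_ball_finite hconn hlf x _
    have hmem : {n : ℕ | g n i ∈ {v | G.dist x v ≤ i.natAbs}} ∈ U := by
      refine Filter.mem_of_superset (hU i.natAbs) ?_
      intro n hn
      simp only [Set.mem_setOf_eq] at hn ⊢
      rcases le_or_gt 0 i with h | h
      · have := hgeo n 0 i (by omega) h (by omega)
        rw [hg0 n] at this
        rw [this]; omega
      · have := hgeo n i 0 (by omega) (by omega) (by omega)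
        rw [hg0 n] at this
        rw [dist_comm, this]; omega
    have hmem2 : (⋃ w ∈ {v | G.dist x v ≤ i.natAbs}, {n : ℕ | g n i = w}) ∈ U :=
      Filter.mem_of_superset hmem (fun n hn => Set.mem_biUnion hn rfl)
    obtain ⟨w, -, hw⟩ := (Ultrafilter.finite_biUnion_mem_iff hBfin).mp hmem2
    exact ⟨w, hw⟩
  choose f hf using key
  refine ⟨f, ?_, ?_⟩
  · obtain ⟨n, hn⟩ := Ultrafilter.nonempty_of_mem (hf 0)
    simp only [Set.mem_setOf_eq] at hn
    rw [← hn, hg0]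
  · intro i j hij
    have hall : ({n | g n i = f i} ∩ ({n | g n j = f j} ∩
        ({n | i.natAbs ≤ n} ∩ {n | j.natAbs ≤ n}))) ∈ U :=
      Filter.inter_mem (hf i)
        (Filter.inter_mem (hf j) (Filter.inter_mem (hU _) (hU _)))
    obtain ⟨n, hni, hnj, hn1, hn2⟩ := Ultrafilter.nonempty_of_mem hall
    simp only [Set.mem_setOf_eq] at hni hnj hn1 hn2
    rw [← hni, ← hnj]
    exact hgeo n i j (by omega) hij (by omega)

end Aux

/-- Let `K` be a finite set of vertices of diameter at most `2r` in a connected,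
locally finite, vertex-transitive, one-ended graph, and let `C` be a connected
component of the complement of `K`. Then any vertex `x` of `C` either lies on a
geodesic ray of the graph whose image is contained in `C`, or is at distance at
most `r` from `K`. -/
theorem geodesic_ray_or_close_to_K
    {V : Type*} (G : SimpleGraph V)
    (hconn : G.Connected)
    (hlf : ∀ v : V, (G.neighborSet v).Finite)
    (hvt : VertexTransitive G)
    (hoe : OneEnded G)
    (r : ℕ) (K : Set V) (hKfin : K.Finite)
    (hKdiam : ∀ u ∈ K, ∀ v ∈ K, G.dist u v ≤ 2 * r)
    (C : (G.induce Kᶜ).ConnectedComponent)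
    (x : ↥Kᶜ) (hx : x ∈ C.supp) :
    (∃ f : ℕ → V,
        Set.range f ⊆ Subtype.val '' C.supp ∧
        (x : V) ∈ Set.range f ∧
        ∀ m n : ℕ, G.dist (f m) (f n) = Nat.dist m n) ∨
      ∃ y ∈ K, G.dist (x : V) y ≤ r := by
  by_cases hclose : ∃ y ∈ K, G.dist (x : V) y ≤ r
  · exact Or.inr hclose
  left
  -- the vertex type is infinite
  obtain ⟨Cinf, hCinf, -⟩ := hoe K hKfin
  have huniv : (Set.univ : Set ↥Kᶜ).Infinite := hCinf.mono (Set.subset_univ _)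
  haveI : Infinite ↥Kᶜ := Set.infinite_univ_iff.mp huniv
  haveI : Infinite V := Infinite.of_injective ((↑·) : ↥Kᶜ → V) Subtype.coe_injective
  obtain ⟨f, hf0, hfgeo⟩ := aux_exists_double_ray hconn hlf hvt (x : V)
  -- a general builder: a nonnegative geodesic half avoiding K gives the ray
  have build : ∀ f' : ℤ → V, f' 0 = (x : V) →
      (∀ i j : ℤ, i ≤ j → G.dist (f' i) (f' j) = (j - i).toNat) →
      (∀ i : ℤ, 0 ≤ i → f' i ∉ K) →
      (∃ h : ℕ → V,
        Set.range h ⊆ Subtype.val '' C.supp ∧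
        (x : V) ∈ Set.range h ∧
        ∀ m n : ℕ, G.dist (h m) (h n) = Nat.dist m n) := by
    intro f' h0 hgeo hK'
    have hmem : ∀ n : ℕ, ∃ h : f' n ∈ Kᶜ, (⟨f' n, h⟩ : ↥Kᶜ) ∈ C.supp := by
      intro n
      induction n with
      | zero =>
        have h00 : f' 0 ∈ Kᶜ := by rw [h0]; exact x.prop
        refine ⟨by exact_mod_cast h00, ?_⟩
        have : (⟨f' ((0 : ℕ) : ℤ), by exact_mod_cast h00⟩ : ↥Kᶜ) = x :=
          Subtype.ext (by exact_mod_cast h0)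
        rw [this]; exact hx
      | succ n ih =>
        obtain ⟨hn, hns⟩ := ih
        have hmemK : f' ((n : ℕ) + 1 : ℕ) ∈ Kᶜ := hK' _ (by positivity)
        have hadj : G.Adj (f' n) (f' ((n : ℕ) + 1 : ℕ)) := by
          rw [← SimpleGraph.dist_eq_one_iff_adj]
          have := hgeo (n : ℤ) (((n : ℕ) + 1 : ℕ) : ℤ) (by exact_mod_cast Nat.le_succ n)
          rw [this]
          push_cast
          omega
        have hadj' : (G.induce Kᶜ).Adj ⟨f' n, hn⟩ ⟨f' ((n : ℕ) + 1 : ℕ), hmemK⟩ := by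
          simpa using hadj
        refine ⟨hmemK, ?_⟩
        rw [SimpleGraph.ConnectedComponent.mem_supp_iff] at hns ⊢
        rw [← hns]
        exact (SimpleGraph.ConnectedComponent.connectedComponentMk_eq_of_adj hadj').symm
    refine ⟨fun n => f' n, ?_, ?_, ?_⟩
    · rintro - ⟨n, rfl⟩
      obtain ⟨h, hs⟩ := hmem n
      exact ⟨⟨f' n, h⟩, hs, rfl⟩
    · exact ⟨0, by exact_mod_cast h0⟩
    · intro m n
      rcases le_total m n with h | h
      · have := hgeo m n (by exact_mod_cast h)
        rw [this, Nat.dist_eq_sub_of_le h]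
        omega
      · have := hgeo n m (by exact_mod_cast h)
        show G.dist (f' m) (f' n) = Nat.dist m n
        rw [SimpleGraph.dist_comm, this, Nat.dist_eq_sub_of_le_right h]
        omega
  -- one of the two halves of the double ray avoids K
  have hside : (∀ i : ℤ, 0 ≤ i → f i ∉ K) ∨ (∀ i : ℤ, 0 ≤ i → f (-i) ∉ K) := by
    by_contra hcon
    push_neg at hcon
    obtain ⟨⟨t, ht0, htK⟩, ⟨s, hs0, hsK⟩⟩ := hcon
    have hts : G.dist (f (-s)) (f t) = (t + s).toNat := by
      have := hfgeo (-s) t (by omega)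
      rw [this]
      congr 1
      omega
    have h1 : G.dist (x : V) (f t) = t.toNat := by
      have := hfgeo 0 t ht0
      rw [hf0] at this
      rw [this]
      congr 1
      omega
    have h2 : G.dist (x : V) (f (-s)) = s.toNat := by
      have := hfgeo (-s) 0 (by omega)
      rw [hf0] at this
      rw [SimpleGraph.dist_comm, this]
      congr 1
      omega
    have hd1 : r < t.toNat := by
      by_contra hle
      exact hclose ⟨f t, htK, by omega⟩
    have hd2 : r < s.toNat := by
      by_contra hle
      exact hclose ⟨f (-s), hsK, by omega⟩
    have := hKdiam _ hsK _ htK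
    omega
  rcases hside with h | h
  · exact build f hf0 hfgeo h
  · refine build (fun i => f (-i)) (by simpa using hf0) ?_ h
    intro i j hij
    have := hfgeo (-j) (-i) (by omega)
    show G.dist (f (-i)) (f (-j)) = (j - i).toNat
    rw [SimpleGraph.dist_comm, this]
    congr 1
    omega
end

section
/- Let X be a connected, locally finite, vertex-transitive (homogeneous) one-ended graph, let v₀ be a vertex of X, and let r be a natural number. Then any two vertices u, w with d(v₀,u) > 2r and d(v₀,w) > 2r can be joined by an edge path in X all of whose vertices lie outside the ball B(v₀,r), i.e. every vertex p on the path satisfies d(v₀,p) > r. -/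
open SimpleGraph

section Aux

variable {V : Type*} {G : SimpleGraph V}

/-- Connectivity through a set `S`: there is a walk from `a` to `b` whose support
stays inside `S`. -/
def ConnIn (G : SimpleGraph V) (S : Set V) (a b : V) : Prop :=
  ∃ p : G.Walk a b, ∀ y ∈ p.support, y ∈ S

lemma ConnIn.mem_left {S : Set V} {a b : V} (h : ConnIn G S a b) : a ∈ S :=
  h.choose_spec a h.choose.start_mem_support

lemma ConnIn.mem_right {S : Set V} {a b : V} (h : ConnIn G S a b) : b ∈ S :=
  h.choose_spec b h.choose.end_mem_support

lemma ConnIn.refl {S : Set V} {a : V} (ha : a ∈ S) : ConnIn G S a a :=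
  ⟨SimpleGraph.Walk.nil, by simp [ha]⟩

lemma ConnIn.symm {S : Set V} {a b : V} (h : ConnIn G S a b) : ConnIn G S b a := by
  obtain ⟨p, hp⟩ := h
  exact ⟨p.reverse, fun y hy => hp y (by simpa using hy)⟩

lemma ConnIn.trans {S : Set V} {a b c : V} (h1 : ConnIn G S a b) (h2 : ConnIn G S b c) :
    ConnIn G S a c := by
  obtain ⟨p, hp⟩ := h1; obtain ⟨q, hq⟩ := h2
  refine ⟨p.append q, fun y hy => ?_⟩
  rcases (SimpleGraph.Walk.mem_support_append_iff _ _).mp hy with h | h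
  · exact hp y h
  · exact hq y h

lemma ConnIn.adj_right {S : Set V} {a b c : V} (h : ConnIn G S a b) (hadj : G.Adj b c)
    (hc : c ∈ S) : ConnIn G S a c := by
  obtain ⟨p, hp⟩ := h
  refine ⟨p.concat hadj, fun y hy => ?_⟩
  rw [SimpleGraph.Walk.support_concat, List.mem_append] at hy
  rcases hy with h | h
  · exact hp y h
  · simp at h; subst h; exact hc

lemma connIn_of_induce_walk {S : Set V} :
    ∀ {a b : ↥S} (_ : (G.induce S).Walk a b), ConnIn G S ↑a ↑b := by
  intro a b p
  induction p with
  | nil => exact ConnIn.refl (Subtype.mem _)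
  | @cons a c b h q ih =>
      have h' : G.Adj ↑a ↑c := h
      exact ((ConnIn.refl (Subtype.mem a)).adj_right h' (Subtype.mem c)).trans ih

lemma induce_reachable_of_walk {S : Set V} :
    ∀ {a b : V} (p : G.Walk a b), (∀ y ∈ p.support, y ∈ S) →
      ∀ (ha : a ∈ S) (hb : b ∈ S), (G.induce S).Reachable ⟨a, ha⟩ ⟨b, hb⟩ := by
  intro a b p
  induction p with
  | nil => intro _ ha hb; exact SimpleGraph.Reachable.refl _
  | @cons a c b hadj q ih =>
      intro hsup ha hb
      have hc : c ∈ S := hsup c (by simp)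
      have hA : (G.induce S).Adj ⟨a, ha⟩ ⟨c, hc⟩ := hadj
      exact hA.reachable.trans (ih (fun y hy => hsup y (by simp [hy])) hc hb)

lemma reachable_of_connIn {S : Set V} {a b : V} (h : ConnIn G S a b)
    (ha : a ∈ S) (hb : b ∈ S) : (G.induce S).Reachable ⟨a, ha⟩ ⟨b, hb⟩ := by
  obtain ⟨p, hp⟩ := h
  exact induce_reachable_of_walk p hp ha hb

lemma connIn_closed {S T : Set V} (hT : ∀ a b, a ∈ T → b ∈ S → G.Adj a b → b ∈ T) :
    ∀ {a z : V} (p : G.Walk a z), (∀ y ∈ p.support, y ∈ S) → a ∈ T → z ∈ T := by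
  intro a z p
  induction p with
  | nil => exact fun _ h => h
  | @cons a c z hadj q ih =>
      intro hsup ha
      exact ih (fun y hy => hsup y (by simp [hy])) (hT _ _ ha (hsup c (by simp)) hadj)

lemma connIn_closed' {S T : Set V} (hT : ∀ a b, a ∈ T → b ∈ S → G.Adj a b → b ∈ T)
    {a z : V} (ha : a ∈ T) (h : ConnIn G S a z) : z ∈ T := by
  obtain ⟨p, hp⟩ := h
  exact connIn_closed hT p hp ha

lemma iso_dist (hconn : G.Connected) (φ : G ≃g G) (a b : V) :
    G.dist (φ a) (φ b) = G.dist a b := by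
  have key : ∀ (ψ : G ≃g G) (a b : V), G.dist (ψ a) (ψ b) ≤ G.dist a b := by
    intro ψ a b
    obtain ⟨p, hp⟩ := (hconn a b).exists_walk_length_eq_dist
    calc G.dist (ψ a) (ψ b) ≤ (p.map ψ.toHom).length := SimpleGraph.dist_le _
      _ = p.length := p.length_map _
      _ = G.dist a b := hp
  have h1 := key φ a b
  have h2 := key φ.symm (φ a) (φ b)
  simp only [RelIso.symm_apply_apply] at h2
  omega

lemma exists_adj_dist (hconn : G.Connected) {c z : V} {n : ℕ} (h : G.dist c z = n + 1) :
    ∃ b : V, G.Adj z b ∧ G.dist c b = n := by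
  obtain ⟨p, hp⟩ := (hconn z c).exists_walk_length_eq_dist
  cases p with
  | nil =>
      rw [SimpleGraph.dist_comm] at h
      simp at h
  | @cons _ b _ hadj q =>
      refine ⟨b, hadj, ?_⟩
      have e1 : G.dist b c ≤ q.length := SimpleGraph.dist_le q
      have e2 : q.length + 1 = G.dist z c := by simpa using hp
      have e3 : G.dist z c = n + 1 := by rw [SimpleGraph.dist_comm]; exact h
      have e4 : G.dist c z ≤ G.dist c b + G.dist b z := hconn.dist_triangle
      have e5 : G.dist b z ≤ 1 := by
        have := SimpleGraph.dist_le (SimpleGraph.Walk.cons hadj.symm SimpleGraph.Walk.nil)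
        simpa using this
      have e6 : G.dist b c = G.dist c b := SimpleGraph.dist_comm
      omega

lemma ball_finite (hconn : G.Connected) (hlf : ∀ v : V, (G.neighborSet v).Finite)
    (c : V) : ∀ r : ℕ, {z : V | G.dist c z ≤ r}.Finite := by
  intro r
  induction r with
  | zero =>
      refine Set.Finite.subset (Set.finite_singleton c) ?_
      intro z hz
      simp only [Set.mem_setOf_eq, Nat.le_zero] at hz
      have := (hconn.dist_eq_zero_iff).mp hz
      simp [this]
  | succ n ih =>
      have hsub : {z : V | G.dist c z ≤ n + 1} ⊆
          {z : V | G.dist c z ≤ n} ∪ ⋃ y ∈ {z : V | G.dist c z ≤ n}, G.neighborSet y := by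
        intro z hz
        simp only [Set.mem_setOf_eq] at hz
        by_cases h : G.dist c z ≤ n
        · exact Or.inl h
        · have hd : G.dist c z = n + 1 := by omega
          obtain ⟨b, hab, hb⟩ := exists_adj_dist hconn hd
          exact Or.inr (Set.mem_biUnion (show b ∈ {z : V | G.dist c z ≤ n} from le_of_eq hb)
            hab.symm)
      exact (ih.union (ih.biUnion fun y _ => hlf y)).subset hsub

end Aux

/-- In a connected, locally finite, vertex-transitive, one-ended graph, any two
vertices at distance greater than `2r` from `v₀` can be joined by an edge path
all of whose vertices lie outside the ball `B(v₀, r)`. -/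
theorem path_outside_ball
    {V : Type*} (G : SimpleGraph V)
    (hconn : G.Connected)
    (hlf : ∀ v : V, (G.neighborSet v).Finite)
    (hvt : VertexTransitive G)
    (hoe : OneEnded G)
    (v₀ : V) (r : ℕ)
    (u w : V) (hu : 2 * r < G.dist v₀ u) (hw : 2 * r < G.dist v₀ w) :
    ∃ p : G.Walk u w, ∀ x ∈ p.support, r < G.dist v₀ x := by
  classical
  set K : Set V := {z : V | G.dist v₀ z ≤ r} with hK
  have hKfin : K.Finite := ball_finite hconn hlf v₀ r
  have hmemKc : ∀ z : V, z ∈ Kᶜ ↔ r < G.dist v₀ z := by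
    intro z
    simp [hK, Set.mem_compl_iff, not_le]
  obtain ⟨C, hCinf, hCuniq⟩ := hoe K hKfin
  have main : ∀ (x : V) (hx : 2 * r < G.dist v₀ x) (hx' : x ∈ Kᶜ),
      ((G.induce Kᶜ).connectedComponentMk ⟨x, hx'⟩).supp.Infinite := by
    intro x hx hx'
    by_contra hfin'
    have hsuppfin : (((G.induce Kᶜ).connectedComponentMk ⟨x, hx'⟩).supp).Finite :=
      Set.not_infinite.mp hfin'
    set D : Set V := {z : V | ConnIn G Kᶜ x z} with hD
    have hDKc : D ⊆ Kᶜ := fun z hz => hz.mem_right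
    have hDfin : D.Finite := by
      refine (hsuppfin.image Subtype.val).subset ?_
      intro z hz
      refine ⟨⟨z, hDKc hz⟩, ?_, rfl⟩
      rw [SimpleGraph.ConnectedComponent.mem_supp_iff, SimpleGraph.ConnectedComponent.eq]
      exact reachable_of_connIn hz.symm (hDKc hz) hx'
    have hxD : x ∈ D := ConnIn.refl hx'
    have htri : ∀ z : V, G.dist x z ≤ r → r < G.dist v₀ z := by
      intro z hz
      have e1 : G.dist v₀ x ≤ G.dist v₀ z + G.dist z x := hconn.dist_triangle
      have e2 : G.dist z x = G.dist x z := SimpleGraph.dist_comm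
      omega
    have hball : ∀ z : V, G.dist x z ≤ r → z ∈ D := by
      intro z hz
      obtain ⟨p, hp⟩ := (hconn x z).exists_walk_length_eq_dist
      refine ⟨p, fun y hy => ?_⟩
      have h1 : G.dist x y ≤ (p.takeUntil y hy).length := SimpleGraph.dist_le _
      have h2 := SimpleGraph.Walk.length_takeUntil_le p hy
      exact (hmemKc y).mpr (htri y (by omega))
    have hDcS : ∀ a : V, a ∉ D → r < G.dist x a := by
      intro a ha
      by_contra h
      push_neg at h
      exact ha (hball a h)
    have hDclosed : ∀ a b : V, a ∈ D → b ∈ Kᶜ → G.Adj a b → b ∈ D :=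
      fun a b ha hb hadj => ha.adj_right hadj hb
    set S' : Set V := {z : V | r < G.dist x z} with hS'
    have hCD : ∀ c2 : ↥Kᶜ, c2 ∈ C.supp → (c2 : V) ∉ D := by
      intro c2 hc2 hc
      have hreach := reachable_of_connIn hc hx' (hDKc hc)
      have e1 : (G.induce Kᶜ).connectedComponentMk ⟨(c2 : V), hDKc hc⟩ = C := by
        have he : (⟨(c2 : V), hDKc hc⟩ : ↥Kᶜ) = c2 := Subtype.ext rfl
        rw [he]
        exact (SimpleGraph.ConnectedComponent.mem_supp_iff _ _).mp hc2
      have e2 : (G.induce Kᶜ).connectedComponentMk ⟨x, hx'⟩ = C :=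
        (SimpleGraph.ConnectedComponent.eq.mpr hreach).trans e1
      exact hfin' (by rw [e2]; exact hCinf)
    have cgeo : ∀ a : V, G.dist v₀ a ≤ r → ConnIn G S' a v₀ := by
      intro a haK
      obtain ⟨p, hp⟩ := (hconn v₀ a).exists_walk_length_eq_dist
      refine ⟨p.reverse, fun y hy => ?_⟩
      rw [SimpleGraph.Walk.support_reverse, List.mem_reverse] at hy
      have h1 : G.dist v₀ y ≤ (p.takeUntil y hy).length := SimpleGraph.dist_le _
      have h2 := SimpleGraph.Walk.length_takeUntil_le p hy
      show r < G.dist x y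
      by_contra hcon
      push_neg at hcon
      have e1 : G.dist v₀ x ≤ G.dist v₀ y + G.dist y x := hconn.dist_triangle
      have e2 : G.dist y x = G.dist x y := SimpleGraph.dist_comm
      omega
    have c1 : ∀ (n : ℕ) (a : V), G.dist v₀ a = n → a ∉ D → ConnIn G S' a v₀ := by
      intro n
      induction n with
      | zero => exact fun a h0 _ => cgeo a (by omega)
      | succ n ih =>
          intro a hdist haD
          by_cases haK : G.dist v₀ a ≤ r
          · exact cgeo a haK
          · push_neg at haK
            obtain ⟨b, hab, hb⟩ := exists_adj_dist hconn hdist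
            have hbD : b ∉ D := by
              intro hbD
              exact haD (hDclosed b a hbD ((hmemKc a).mpr haK) hab.symm)
            have hstep : ConnIn G S' a b := by
              refine ⟨SimpleGraph.Walk.cons hab SimpleGraph.Walk.nil, fun y hy => ?_⟩
              simp only [SimpleGraph.Walk.support_cons, SimpleGraph.Walk.support_nil,
                List.mem_cons, List.mem_singleton, List.not_mem_nil, or_false] at hy
              rcases hy with h | h
              · rw [h]; exact hDcS a haD
              · rw [h]; exact hDcS b hbD
            exact hstep.trans (ih b hb hbD)
    obtain ⟨ψ, hψ⟩ := hvt v₀ x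
    have hdψ : ∀ a b : V, G.dist (ψ a) (ψ b) = G.dist a b := iso_dist hconn ψ
    set D' : Set V := ψ '' D with hD'
    have hD'fin : D'.Finite := hDfin.image _
    have hD'S' : D' ⊆ S' := by
      rintro _ ⟨z, hz, rfl⟩
      show r < G.dist x (ψ z)
      rw [← hψ, hdψ]
      exact (hmemKc z).mp (hDKc hz)
    have hD'closed : ∀ a b : V, a ∈ D' → b ∈ S' → G.Adj a b → b ∈ D' := by
      rintro _ b ⟨a₀, ha₀, rfl⟩ hbS hadj
      have hb' : ψ (ψ.symm b) = b := ψ.apply_symm_apply b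
      have hadj' : G.Adj a₀ (ψ.symm b) := by
        rw [← ψ.map_adj_iff, hb']
        exact hadj
      have hmem : ψ.symm b ∈ Kᶜ := by
        rw [hmemKc]
        have he : G.dist x b = G.dist v₀ (ψ.symm b) := by
          conv_lhs => rw [← hψ, ← hb']
          rw [hdψ]
        rw [← he]
        exact hbS
      exact ⟨ψ.symm b, hDclosed a₀ (ψ.symm b) ha₀ hmem hadj', hb'⟩
    obtain ⟨c₀, hc₀⟩ := hCinf.nonempty
    have hD'D : D' ⊆ D := by
      intro z hzD'
      by_contra hzD
      have hzv : ConnIn G S' z v₀ := c1 _ z rfl hzD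
      have hCsub : ∀ c2 : ↥Kᶜ, c2 ∈ C.supp → (c2 : V) ∈ D' := by
        intro c2 hc2
        have h2 : ConnIn G S' (c2 : V) v₀ := c1 _ _ rfl (hCD c2 hc2)
        exact connIn_closed' hD'closed hzD' (hzv.trans h2.symm)
      have hinf : (Subtype.val '' C.supp).Infinite :=
        hCinf.image Subtype.val_injective.injOn
      refine hinf (hD'fin.subset ?_)
      rintro _ ⟨c2, hc2, rfl⟩
      exact hCsub c2 hc2
    have hxD' : x ∉ D' := by
      intro h
      have := hD'S' h
      simp only [hS', Set.mem_setOf_eq, SimpleGraph.dist_self] at this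
      omega
    have hsub : D' ⊆ D \ {x} := fun z hz =>
      ⟨hD'D hz, by rintro rfl; exact hxD' hz⟩
    have hcard1 : D'.ncard = D.ncard := Set.ncard_image_of_injective D ψ.injective
    have hcard2 : D'.ncard ≤ (D \ {x}).ncard := Set.ncard_le_ncard hsub (hDfin.diff)
    have hcard3 : (D \ {x}).ncard < D.ncard := Set.ncard_diff_singleton_lt_of_mem hxD hDfin
    omega
  have hu' : u ∈ Kᶜ := (hmemKc u).mpr (by omega)
  have hw' : w ∈ Kᶜ := (hmemKc w).mpr (by omega)
  have e1 := hCuniq _ (main u hu hu')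
  have e2 := hCuniq _ (main w hw hw')
  have hreach : (G.induce Kᶜ).Reachable ⟨u, hu'⟩ ⟨w, hw'⟩ :=
    SimpleGraph.ConnectedComponent.exact (e1.trans e2.symm)
  obtain ⟨p, hp⟩ := connIn_of_induce_walk hreach.some
  exact ⟨p, fun x hxp => (hmemKc x).mp (hp x hxp)⟩
end
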